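/- arXiv:2004.01785 — 2 statements merged into one kernel-verified Lean document; each statement's English description precedes it below -/
import Mathlib

section
/- Key inequality for maximal joint conditional types: let x, x̂ ∈ X^n have the same type, let p_{YŶ|X} be a maximal joint conditional type (i.e., p_{YŶ|X}(k1,k2|j) = 0 whenever j ∉ S_q(k1,k2)), and suppose ŷ ∈ T^n_x(p_{Ŷ|X}) ∩ T^n_{x̂}(p_{Ŷ|X}) and y ∈ T^n_x(p_{Y|X}) with the joint conditional type of (y,ŷ) given x equal to p_{YŶ|X}. Then q(x,y) ≤ q(x̂,y). -/
open Finset in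
lemma sum_eq_fiber_sum {X Y : Type*} [Fintype X] [Fintype Y] [DecidableEq X] [DecidableEq Y]
    (n : ℕ) (q : X → Y → ℝ) (z : Fin n → X) (w : Fin n → Y) :
    ∑ i, q (z i) (w i)
      = ∑ p : X × Y, ((univ.filter fun i => z i = p.1 ∧ w i = p.2).card : ℝ) * q p.1 p.2 := by
  rw [← Finset.sum_fiberwise univ (fun i => (z i, w i)) (fun i => q (z i) (w i))]
  refine Finset.sum_congr rfl fun p _ => ?_
  have : (univ.filter fun i => (z i, w i) = p)
      = (univ.filter fun i => z i = p.1 ∧ w i = p.2) := by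
    ext i; simp [Prod.ext_iff]
  calc ∑ i ∈ univ.filter (fun i => (z i, w i) = p), q (z i) (w i)
      = ∑ _i ∈ univ.filter (fun i => (z i, w i) = p), q p.1 p.2 := by
        refine Finset.sum_congr rfl fun i hi => ?_
        simp only [Finset.mem_filter] at hi
        rw [← hi.2]
    _ = _ := by rw [this, Finset.sum_const, nsmul_eq_mul]

open Finset in
/-- Key inequality for maximal joint conditional types (Lemma 3 of the paper):
if `x, x̂` have the same type, the joint conditional type of `(y,ŷ)` given `x`
is maximal (supported on triples `(j,k1,k2)` with `j ∈ S_q(k1,k2)`), and `ŷ`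
has the same conditional type given `x` and given `x̂` (a type conflict), then
`q(x,y) ≤ q(x̂,y)`. -/
theorem metric_le_of_maximal_type_conflict
    {X Y : Type*} [Fintype X] [Fintype Y] [DecidableEq X] [DecidableEq Y]
    (n : ℕ) (hn : 1 ≤ n) (q : X → Y → ℝ)
    (x xhat : Fin n → X) (y yhat : Fin n → Y)
    -- x and x̂ have the same type
    (htype : ∀ j : X,
      (univ.filter (fun i => x i = j)).card = (univ.filter (fun i => xhat i = j)).card)
    -- the joint conditional type of (y,ŷ) given x is maximal
    (hmax : ∀ (j : X) (k1 k2 : Y),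
      0 < (univ.filter (fun i => x i = j ∧ y i = k1 ∧ yhat i = k2)).card →
      ∀ j' : X, q j' k2 - q j' k1 ≤ q j k2 - q j k1)
    -- type conflict: ŷ has the same conditional type given x and given x̂
    (hconflict : ∀ (j : X) (k : Y),
      (univ.filter (fun i => x i = j ∧ yhat i = k)).card =
      (univ.filter (fun i => xhat i = j ∧ yhat i = k)).card) :
    ∑ i, q (x i) (y i) ≤ ∑ i, q (xhat i) (y i) := by
  have key : ∀ i, q (xhat i) (yhat i) - q (xhat i) (y i)
      ≤ q (x i) (yhat i) - q (x i) (y i) := by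
    intro i
    refine hmax (x i) (y i) (yhat i) ?_ (xhat i)
    refine Finset.card_pos.mpr ⟨i, ?_⟩
    simp
  have hsum : ∑ i, q (x i) (yhat i) = ∑ i, q (xhat i) (yhat i) := by
    rw [sum_eq_fiber_sum, sum_eq_fiber_sum]
    refine Finset.sum_congr rfl fun p _ => ?_
    rw [hconflict p.1 p.2]
  have hk : ∑ i, (q (xhat i) (yhat i) - q (xhat i) (y i))
      ≤ ∑ i, (q (x i) (yhat i) - q (x i) (y i)) :=
    Finset.sum_le_sum fun i _ => key i
  rw [Finset.sum_sub_distrib, Finset.sum_sub_distrib] at hk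
  linarith
end

section
/- The central metric chain inequality: for sequences x, x̂ ∈ X^n with joint triple empirical distributions satisfying Σ_j p̂_{x̂yŷ}(j,k1,k2) = Σ_j p̂_{xyŷ}(j,k1,k2) for all k1,k2, and such that p̂_{xyŷ}(j,k1,k2) > 0 implies j ∈ argmax_{j'}(q(j',k2) − q(j',k1)), one has q(x̂,ŷ) − q(x̂,y) ≤ q(x,ŷ) − q(x,y). -/
open Finset in
/-- The central metric chain inequality: if the `(y,ŷ)`-marginals of the triple
empirical distributions with `x` and with `x̂` agree, and the triple type with `x`
is supported on maximizing inputs of `q(·,k2) − q(·,k1)`, then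
`q(x̂,ŷ) − q(x̂,y) ≤ q(x,ŷ) − q(x,y)`. -/
theorem metric_chain_inequality
    {X Y : Type*} [Fintype X] [Fintype Y] [DecidableEq X] [DecidableEq Y]
    (n : ℕ) (hn : 1 ≤ n) (q : X → Y → ℝ)
    (x xhat : Fin n → X) (y yhat : Fin n → Y)
    -- (i) marginals over j of the triple types agree
    (hmarg : ∀ (k1 k2 : Y),
      (∑ j : X, (univ.filter (fun i => xhat i = j ∧ y i = k1 ∧ yhat i = k2)).card) =
      (∑ j : X, (univ.filter (fun i => x i = j ∧ y i = k1 ∧ yhat i = k2)).card))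
    -- (ii) the triple type with x is supported on maximizers
    (hsupp : ∀ (j : X) (k1 k2 : Y),
      0 < (univ.filter (fun i => x i = j ∧ y i = k1 ∧ yhat i = k2)).card →
      ∀ j' : X, q j' k2 - q j' k1 ≤ q j k2 - q j k1) :
    (∑ i, q (xhat i) (yhat i)) - (∑ i, q (xhat i) (y i)) ≤
      (∑ i, q (x i) (yhat i)) - (∑ i, q (x i) (y i)) := by
  rw [← Finset.sum_sub_distrib, ← Finset.sum_sub_distrib]
  apply Finset.sum_le_sum
  intro i _
  exact hsupp (x i) (y i) (yhat i)
    (Finset.card_pos.mpr ⟨i, by simp⟩) (xhat i)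
end
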